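/- Let a, b be positive real numbers with a ≠ b, let β be a real number with −1 < β < 3 and β ∉ {0, 1, 2}, and set θ = 2π/3. Then ∫₀^∞ x^β (x − a) / ((x³ + a³)(x² − b x + b²)) dx = (2π/(3(a³−b³))) · csc(π(β−1)) · [ √3 b^{β−1}(b sin(θ(β+1)) + a sin(θβ)) − a^{β−1}(b cos(θβ) − a cos(θ(β+1))) − a^{β−1}(a − b) ]. -/

import Mathlib

/-!
Since `x³ + b³ = (x + b)(x² − bx + b²)`, the integrand is
`(x^(β+2) + (b − a) x^(β+1) − ab x^β) / ((x³ + a³)(x³ + b³))`, so the integral is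
`K(β+3) + (b − a) K(β+2) − ab K(β+1)` for `K(s) = ∫₀^∞ x^(s-1) / ((x^p + a^p)(x^p + b^p)) dx`
with `p = 3`. Partial fractions in `x^p`, applied to `x^(s-1)` when `s < p` and to
`x^p · x^(s-p-1)` when `s > p`, reduce `K(s)` to Mellin transforms of `1 / (x^p + c^p)`; the
substitutions `x = c y`, `y = t^(1/p)` and `t = u / (1 - u)` turn these into the Beta integral
`B(s, 1 - s) = π / sin (π s)`. With `φ = πβ/3`, every trigonometric value in the result is a
rational function of `sin φ`, `sin (φ + 2π/3)` and `√3`, because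
`sin φ + sin (φ + 2π/3) = sin (φ + π/3)`, and the final identity becomes a rational one.
-/

open MeasureTheory Real Set Filter Asymptotics Topology

theorem integral_rpow_mul_one_sub_rpow {u v : ℝ} (hu : 0 < u) (hv : 0 < v) :
    ∫ x in (0 : ℝ)..1, x ^ (u - 1) * (1 - x) ^ (v - 1) = Gamma u * Gamma v / Gamma (u + v) := by
  have hB := Complex.betaIntegral_eq_Gamma_mul_div u v (by simpa) (by simpa)
  have hcpow : Complex.betaIntegral u v =
      ↑(∫ x in (0 : ℝ)..1, x ^ (u - 1) * (1 - x) ^ (v - 1)) := by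
    rw [Complex.betaIntegral, ← intervalIntegral.integral_ofReal]
    refine intervalIntegral.integral_congr fun x hx => ?_
    rw [uIcc_of_le zero_le_one] at hx
    simp only [Complex.ofReal_mul, Complex.ofReal_cpow hx.1,
      Complex.ofReal_cpow (sub_nonneg.2 hx.2), Complex.ofReal_sub, Complex.ofReal_one]
  rw [hcpow, ← Complex.ofReal_add, Complex.Gamma_ofReal, Complex.Gamma_ofReal,
    Complex.Gamma_ofReal] at hB
  exact_mod_cast hB

theorem integral_rpow_div_one_add {s : ℝ} (hs₀ : 0 < s) (hs₁ : s < 1) :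
    ∫ x in Ioi (0 : ℝ), x ^ (s - 1) / (1 + x) = π / sin (π * s) := by
  have himage : (fun t => t / (1 - t)) '' Ioo (0 : ℝ) 1 = Ioi 0 := by
    ext x
    refine ⟨?_, fun hx => ⟨x / (1 + x), ?_, ?_⟩⟩
    · rintro ⟨t, ht, rfl⟩
      exact div_pos ht.1 (sub_pos.2 ht.2)
    · have hx : (0 : ℝ) < x := hx
      exact ⟨by positivity, (div_lt_one (by positivity)).2 (by linarith)⟩
    · have hx : (0 : ℝ) < x := hx
      field_simp
      ring
  have hderiv : ∀ t ∈ Ioo (0 : ℝ) 1,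
      HasDerivWithinAt (fun t => t / (1 - t)) (((1 - t) ^ 2)⁻¹) (Ioo 0 1) t := by
    intro t ht
    have h1t : 1 - t ≠ 0 := (sub_pos.2 ht.2).ne'
    refine (((hasDerivAt_id' t).div ((hasDerivAt_id' t).const_sub 1) h1t).congr_deriv ?_)
      |>.hasDerivWithinAt
    field_simp
    ring
  have hinj : InjOn (fun t => t / (1 - t)) (Ioo (0 : ℝ) 1) := by
    intro t ht t' ht' h
    have := (sub_pos.2 ht.2).ne'
    have := (sub_pos.2 ht'.2).ne'
    field_simp at h
    linarith
  have hbeta := integral_rpow_mul_one_sub_rpow hs₀ (sub_pos.2 hs₁)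
  rw [add_sub_cancel, Gamma_one, div_one, Gamma_mul_Gamma_one_sub,
    intervalIntegral.integral_of_le zero_le_one, integral_Ioc_eq_integral_Ioo] at hbeta
  rw [← hbeta, ← himage, integral_image_eq_integral_abs_deriv_smul measurableSet_Ioo hderiv hinj]
  refine setIntegral_congr_fun measurableSet_Ioo fun t ht => ?_
  have h1t : 0 < 1 - t := sub_pos.2 ht.2
  have hsum : 1 + t / (1 - t) = (1 - t)⁻¹ := by field_simp; ring
  rw [smul_eq_mul, hsum, abs_of_pos (by positivity), div_rpow ht.1.le h1t.le,
    rpow_sub_one h1t.ne', show 1 - s - 1 = -s by ring, rpow_neg h1t.le]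
  field_simp

section Mellin

variable {p s : ℝ}

theorem integral_rpow_div_one_add_rpow (hp : 0 < p) (hs₀ : 0 < s) (hsp : s < p) :
    ∫ x in Ioi (0 : ℝ), x ^ (s - 1) / (1 + x ^ p) = π / (p * sin (π * s / p)) := by
  have hsub := integral_comp_rpow_Ioi_of_pos (g := fun y => y ^ (s / p - 1) / (1 + y) / p) hp
  rw [integral_div, integral_rpow_div_one_add (div_pos hs₀ hp) ((div_lt_one hp).2 hsp),
    mul_div_assoc'] at hsub
  rw [mul_comm p, ← div_div, ← hsub]
  refine setIntegral_congr_fun measurableSet_Ioi fun x hx => ?_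
  have hx : 0 < x := hx
  rw [smul_eq_mul, ← rpow_mul hx.le, mul_sub, mul_div_cancel₀ _ hp.ne', mul_one,
    show s - 1 = p - 1 + (s - p) by ring, rpow_add hx]
  field_simp

theorem integral_rpow_div_rpow_add_rpow {c : ℝ} (hp : 0 < p) (hc : 0 < c) (hs₀ : 0 < s)
    (hsp : s < p) :
    ∫ x in Ioi (0 : ℝ), x ^ (s - 1) / (x ^ p + c ^ p) =
      c ^ (s - p) * (π / (p * sin (π * s / p))) := by
  have hscale := integral_comp_mul_left_Ioi (fun x => x ^ (s - 1) / (x ^ p + c ^ p)) 0 hc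
  rw [mul_zero, smul_eq_mul, eq_inv_mul_iff_mul_eq₀ hc.ne'] at hscale
  rw [← hscale, ← integral_rpow_div_one_add_rpow hp hs₀ hsp, ← integral_const_mul,
    ← integral_const_mul]
  refine setIntegral_congr_fun measurableSet_Ioi fun x hx => ?_
  have hx : 0 < x := hx
  have := rpow_pos_of_pos hc p
  rw [mul_rpow hc.le hx.le, mul_rpow hc.le hx.le, rpow_sub_one hc.ne', rpow_sub hc]
  field_simp
  ring

theorem integrableOn_rpow_mul_of_isBigO_atTop {f : ℝ → ℝ} {a : ℝ} (hf : ContinuousOn f (Ici 0))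
    (hf_top : f =O[atTop] (· ^ (-a))) (hs₀ : 0 < s) (hsa : s < a) :
    IntegrableOn (fun x => x ^ (s - 1) * f x) (Ioi 0) := by
  have hf_bot : f =O[𝓝[>] 0] (· ^ (-(0 : ℝ))) := by
    simp only [neg_zero, rpow_zero]
    exact ((hf 0 self_mem_Ici).mono Ioi_subset_Ici_self).tendsto.isBigO_one ℝ
  exact mellin_convergent_of_isBigO_scalar
    ((hf.mono Ioi_subset_Ici_self).locallyIntegrableOn measurableSet_Ioi) hf_top hsa hf_bot hs₀

theorem isBigO_inv_rpow_add_rpow_atTop {c : ℝ} (hc : 0 ≤ c) :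
    (fun x : ℝ => (x ^ p + c ^ p)⁻¹) =O[atTop] (· ^ (-p)) := by
  refine IsBigO.of_bound 1 ?_
  filter_upwards [eventually_gt_atTop 0] with x hx
  have hxp := rpow_pos_of_pos hx p
  have hcp := rpow_nonneg hc p
  rw [one_mul, rpow_neg hx.le, norm_inv, norm_inv, norm_of_nonneg hxp.le,
    norm_of_nonneg (by positivity)]
  gcongr
  linarith

theorem continuousOn_inv_rpow_add_rpow {c : ℝ} (hp : 0 < p) (hc : 0 < c) :
    ContinuousOn (fun x : ℝ => (x ^ p + c ^ p)⁻¹) (Ici 0) :=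
  ((continuous_rpow_const hp.le).add continuous_const).continuousOn.inv₀ fun _ hx =>
    (add_pos_of_nonneg_of_pos (rpow_nonneg hx p) (rpow_pos_of_pos hc p)).ne'

theorem integrableOn_rpow_div_rpow_add_rpow {c : ℝ} (hp : 0 < p) (hc : 0 < c) (hs₀ : 0 < s)
    (hsp : s < p) :
    IntegrableOn (fun x => x ^ (s - 1) / (x ^ p + c ^ p)) (Ioi 0) := by
  simpa only [div_eq_mul_inv] using integrableOn_rpow_mul_of_isBigO_atTop
    (continuousOn_inv_rpow_add_rpow hp hc) (isBigO_inv_rpow_add_rpow_atTop hc.le) hs₀ hsp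

variable {a b : ℝ}

theorem integrableOn_rpow_div_rpow_add_rpow_mul (hp : 0 < p) (ha : 0 < a) (hb : 0 < b)
    (hs₀ : 0 < s) (hs : s < 2 * p) :
    IntegrableOn (fun x => x ^ (s - 1) / ((x ^ p + a ^ p) * (x ^ p + b ^ p))) (Ioi 0) := by
  have hf_top := (isBigO_inv_rpow_add_rpow_atTop (p := p) ha.le).mul
    (isBigO_inv_rpow_add_rpow_atTop (p := p) hb.le)
  have hpow : (fun x : ℝ => x ^ (-p) * x ^ (-p)) =ᶠ[atTop] (· ^ (-(2 * p))) := by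
    filter_upwards [eventually_gt_atTop 0] with x hx
    rw [← rpow_add hx]
    ring_nf
  simpa only [div_eq_mul_inv, mul_inv, Pi.mul_apply] using integrableOn_rpow_mul_of_isBigO_atTop
    ((continuousOn_inv_rpow_add_rpow hp ha).mul (continuousOn_inv_rpow_add_rpow hp hb))
    (hf_top.congr' EventuallyEq.rfl hpow) hs₀ hs

theorem integral_rpow_div_rpow_add_rpow_mul (hp : 0 < p) (ha : 0 < a) (hb : 0 < b) (hab : a ≠ b)
    (hs₀ : 0 < s) (hs : s < 2 * p) (hsp : s ≠ p) :
    ∫ x in Ioi (0 : ℝ), x ^ (s - 1) / ((x ^ p + a ^ p) * (x ^ p + b ^ p)) =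
      π / (p * sin (π * s / p)) * (a ^ (s - p) - b ^ (s - p)) / (b ^ p - a ^ p) := by
  have hpow : b ^ p - a ^ p ≠ 0 :=
    sub_ne_zero.2 fun h => hab ((rpow_left_inj ha.le hb.le hp.ne').1 h.symm)
  rcases lt_or_gt_of_ne hsp with hsp | hsp
  · have hsplit : ∀ x ∈ Ioi (0 : ℝ), x ^ (s - 1) / ((x ^ p + a ^ p) * (x ^ p + b ^ p)) =
        (x ^ (s - 1) / (x ^ p + a ^ p) - x ^ (s - 1) / (x ^ p + b ^ p)) / (b ^ p - a ^ p) := by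
      intro x hx
      have hx : 0 < x := hx
      have := rpow_pos_of_pos hx p
      have : 0 < x ^ p + a ^ p := by positivity
      have : 0 < x ^ p + b ^ p := by positivity
      field_simp
      ring
    rw [setIntegral_congr_fun measurableSet_Ioi hsplit, integral_div,
      integral_sub (integrableOn_rpow_div_rpow_add_rpow hp ha hs₀ hsp)
        (integrableOn_rpow_div_rpow_add_rpow hp hb hs₀ hsp),
      integral_rpow_div_rpow_add_rpow hp ha hs₀ hsp, integral_rpow_div_rpow_add_rpow hp hb hs₀ hsp]
    ring
  · have hs' : 0 < s - p := sub_pos.2 hsp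
    have hsp' : s - p < p := by linarith
    have hsplit : ∀ x ∈ Ioi (0 : ℝ), x ^ (s - 1) / ((x ^ p + a ^ p) * (x ^ p + b ^ p)) =
        (b ^ p * (x ^ (s - p - 1) / (x ^ p + b ^ p))
          - a ^ p * (x ^ (s - p - 1) / (x ^ p + a ^ p))) / (b ^ p - a ^ p) := by
      intro x hx
      have hx : 0 < x := hx
      have := rpow_pos_of_pos hx p
      have : 0 < x ^ p + a ^ p := by positivity
      have : 0 < x ^ p + b ^ p := by positivity
      rw [show s - 1 = p + (s - p - 1) by ring, rpow_add hx]
      field_simp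
      ring
    have hsin : sin (π * (s - p) / p) = -sin (π * s / p) := by
      rw [mul_sub, sub_div, mul_div_cancel_right₀ _ hp.ne', sin_sub_pi]
    have hexp : ∀ c : ℝ, 0 < c → c ^ p * c ^ (s - p - p) = c ^ (s - p) := fun c hc => by
      rw [← rpow_add hc]; ring_nf
    rw [setIntegral_congr_fun measurableSet_Ioi hsplit, integral_div,
      integral_sub ((integrableOn_rpow_div_rpow_add_rpow hp hb hs' hsp').const_mul _)
        ((integrableOn_rpow_div_rpow_add_rpow hp ha hs' hsp').const_mul _),
      integral_const_mul, integral_const_mul,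
      integral_rpow_div_rpow_add_rpow hp ha hs' hsp',
      integral_rpow_div_rpow_add_rpow hp hb hs' hsp',
      hsin, ← mul_assoc, ← mul_assoc, hexp a ha, hexp b hb]
    ring

end Mellin

theorem sin_two_pi_div_three : sin (2 * π / 3) = √3 / 2 := by
  rw [show 2 * π / 3 = π - π / 3 by ring, sin_pi_sub, sin_pi_div_three]

theorem cos_two_pi_div_three : cos (2 * π / 3) = -(1 / 2) := by
  rw [show 2 * π / 3 = π - π / 3 by ring, cos_pi_sub, cos_pi_div_three]

theorem sin_add_sin_add_two_pi_div_three (x : ℝ) :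
    sin x + sin (x + 2 * π / 3) = sin (x + π / 3) := by
  rw [sin_add, sin_add, sin_two_pi_div_three, cos_two_pi_div_three, sin_pi_div_three,
    cos_pi_div_three]
  ring

theorem sqrt_three_mul_cos (x : ℝ) : √3 * cos x = sin (x + π / 3) + sin (x + 2 * π / 3) := by
  rw [sin_add, sin_add, sin_two_pi_div_three, cos_two_pi_div_three, sin_pi_div_three,
    cos_pi_div_three]
  ring

theorem sqrt_three_mul_cos_add_pi_div_three (x : ℝ) :
    √3 * cos (x + π / 3) = sin (x + 2 * π / 3) - sin x := by
  rw [sqrt_three_mul_cos, show x + π / 3 + π / 3 = x + 2 * π / 3 by ring,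
    show x + π / 3 + 2 * π / 3 = x + π by ring, sin_add_pi, sub_eq_add_neg]

theorem sin_three_mul_eq_four_mul_sin_mul_sin_mul_sin (x : ℝ) :
    sin (3 * x) = 4 * sin x * sin (x + π / 3) * sin (x + 2 * π / 3) := by
  rw [sin_three_mul, sin_add, sin_add, sin_two_pi_div_three, cos_two_pi_div_three,
    sin_pi_div_three, cos_pi_div_three]
  linear_combination (-3 * sin x) * sin_sq_add_cos_sq x
    - sin x * cos x ^ 2 * sq_sqrt (show (0 : ℝ) ≤ 3 by norm_num)

theorem sin_pi_mul_div_ne_zero {p s : ℝ} (hp : 0 < p) (hs₀ : 0 < s) (hs : s < 2 * p)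
    (hsp : s ≠ p) : sin (π * s / p) ≠ 0 := by
  rw [Ne, sin_eq_zero_iff]
  rintro ⟨n, hn⟩
  rw [eq_div_iff hp.ne'] at hn
  have hn : (n : ℝ) * p = s := mul_left_cancel₀ pi_ne_zero (by linear_combination hn)
  have hn₀ : (0 : ℝ) < n := by nlinarith
  have hn₂ : (n : ℝ) < 2 := by nlinarith
  obtain rfl : n = 1 := by
    have : 0 < n := by exact_mod_cast hn₀
    have : n < 2 := by exact_mod_cast hn₂
    omega
  simp_all

theorem I4_mellin_combination_eq {a b β : ℝ} (ha : 0 < a) (hb : 0 < b) (hab : a ≠ b)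
    (hβ₁ : -1 < β) (hβ₂ : β < 3) (h0 : β ≠ 0) (h1 : β ≠ 1) (h2 : β ≠ 2) :
    π / (3 * sin (π * (β + 3) / 3)) * (a ^ (β + 3 - 3) - b ^ (β + 3 - 3))
          / (b ^ (3 : ℝ) - a ^ (3 : ℝ))
        + (b - a) * (π / (3 * sin (π * (β + 2) / 3)) * (a ^ (β + 2 - 3) - b ^ (β + 2 - 3))
          / (b ^ (3 : ℝ) - a ^ (3 : ℝ)))
        - a * b * (π / (3 * sin (π * (β + 1) / 3)) * (a ^ (β + 1 - 3) - b ^ (β + 1 - 3))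
          / (b ^ (3 : ℝ) - a ^ (3 : ℝ))) =
      2 * π / (3 * (a ^ 3 - b ^ 3)) * (sin (π * (β - 1)))⁻¹ *
        (√3 * b ^ (β - 1) * (b * sin (2 * π / 3 * (β + 1)) + a * sin (2 * π / 3 * β))
          - a ^ (β - 1) * (b * cos (2 * π / 3 * β) - a * cos (2 * π / 3 * (β + 1)))
          - a ^ (β - 1) * (a - b)) := by
  have hσ₃ := sin_pi_mul_div_ne_zero three_pos (s := β + 3) (by linarith) (by linarith)
    (by contrapose! h0; linarith)
  have hσ₂ := sin_pi_mul_div_ne_zero three_pos (s := β + 2) (by linarith) (by linarith)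
    (by contrapose! h1; linarith)
  have hσ₁ := sin_pi_mul_div_ne_zero three_pos (s := β + 1) (by linarith) (by linarith)
    (by contrapose! h2; linarith)
  have hcube : a ^ 3 ≠ b ^ 3 := fun h => hab ((pow_left_inj₀ ha.le hb.le three_ne_zero).1 h)
  have := sub_ne_zero.2 hcube
  have := sub_ne_zero.2 hcube.symm
  set φ := π * β / 3
  have hcos₀ : cos φ = (sin (φ + π / 3) + sin (φ + 2 * π / 3)) / √3 := by
    rw [← sqrt_three_mul_cos]
    field_simp
  have hcos₁ : cos (φ + π / 3) = (sin (φ + 2 * π / 3) - sin φ) / √3 := by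
    rw [← sqrt_three_mul_cos_add_pi_div_three]
    field_simp
  rw [show π * (β + 3) / 3 = φ + π by ring, sin_add_pi, neg_ne_zero] at hσ₃
  rw [show π * (β + 2) / 3 = φ + 2 * π / 3 by ring] at hσ₂
  rw [show π * (β + 1) / 3 = φ + π / 3 by ring, ← sin_add_sin_add_two_pi_div_three] at hσ₁
  rw [show π * (β + 3) / 3 = φ + π by ring, show π * (β + 2) / 3 = φ + 2 * π / 3 by ring,
    show π * (β + 1) / 3 = φ + π / 3 by ring, show π * (β - 1) = 3 * φ - π by ring,
    show 2 * π / 3 * β = 2 * φ by ring, show 2 * π / 3 * (β + 1) = 2 * (φ + π / 3) by ring,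
    sin_add_pi, sin_sub_pi, sin_three_mul_eq_four_mul_sin_mul_sin_mul_sin, sin_two_mul,
    sin_two_mul, cos_two_mul_eq_one_sub, cos_two_mul_eq_one_sub, hcos₀, hcos₁,
    ← sin_add_sin_add_two_pi_div_three]
  rw [show β + 3 - 3 = β - 1 + 1 by ring, show β + 2 - 3 = β - 1 by ring,
    show β + 1 - 3 = β - 1 - 1 by ring, rpow_add_one ha.ne', rpow_add_one hb.ne',
    rpow_sub_one ha.ne' (β - 1), rpow_sub_one hb.ne' (β - 1), rpow_ofNat, rpow_ofNat]
  -- abstracting the sines keeps `field_simp` from normalising their arguments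
  generalize sin φ = σ₀ at *
  generalize sin (φ + 2 * π / 3) = σ₂ at *
  field_simp
  ring

theorem I4_integrand_eq {a b x : ℝ} (ha : 0 < a) (hb : 0 < b) (hx : 0 < x) (β : ℝ) :
    x ^ β * (x - a) / ((x ^ 3 + a ^ 3) * (x ^ 2 - b * x + b ^ 2)) =
      x ^ (β + 3 - 1) / ((x ^ (3 : ℝ) + a ^ (3 : ℝ)) * (x ^ (3 : ℝ) + b ^ (3 : ℝ)))
        + (b - a) * (x ^ (β + 2 - 1) / ((x ^ (3 : ℝ) + a ^ (3 : ℝ)) * (x ^ (3 : ℝ) + b ^ (3 : ℝ))))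
        - a * b *
          (x ^ (β + 1 - 1) / ((x ^ (3 : ℝ) + a ^ (3 : ℝ)) * (x ^ (3 : ℝ) + b ^ (3 : ℝ)))) := by
  have : 0 < x ^ 2 - b * x + b ^ 2 := by nlinarith [sq_nonneg (x - b)]
  rw [show β + 3 - 1 = β + 2 by ring, show β + 2 - 1 = β + 1 by ring, add_sub_cancel_right,
    rpow_add hx, rpow_add_one hx.ne']
  simp only [rpow_ofNat]
  rw [show x ^ 3 + b ^ 3 = (x + b) * (x ^ 2 - b * x + b ^ 2) by ring]
  field_simp
  ring

/-- Evaluation of `I₄(β) = ∫₀^∞ x^β (x−a) /((x³+a³)(x²−bx+b²)) dx` for `−1 < β < 3`,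
`β ∉ {0,1,2}`, with `θ = 2π/3` and `csc x = 1/sin x`. -/
theorem I4_eval (a b : ℝ) (ha : 0 < a) (hb : 0 < b) (hab : a ≠ b)
    (β : ℝ) (hβ₁ : -1 < β) (hβ₂ : β < 3) (h0 : β ≠ 0) (h1 : β ≠ 1) (h2 : β ≠ 2) :
    ∫ x in Set.Ioi (0 : ℝ),
        x ^ β * (x - a) / ((x ^ 3 + a ^ 3) * (x ^ 2 - b * x + b ^ 2)) =
      2 * Real.pi / (3 * (a ^ 3 - b ^ 3)) * (Real.sin (Real.pi * (β - 1)))⁻¹ *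
        (Real.sqrt 3 * b ^ (β - 1) *
            (b * Real.sin (2 * Real.pi / 3 * (β + 1)) + a * Real.sin (2 * Real.pi / 3 * β))
          - a ^ (β - 1) *
            (b * Real.cos (2 * Real.pi / 3 * β) - a * Real.cos (2 * Real.pi / 3 * (β + 1)))
          - a ^ (β - 1) * (a - b)) := by
  have hK : ∀ s : ℝ, 0 < s → s < 6 → IntegrableOn
      (fun x => x ^ (s - 1) / ((x ^ (3 : ℝ) + a ^ (3 : ℝ)) * (x ^ (3 : ℝ) + b ^ (3 : ℝ))))
      (Ioi 0) :=
    fun s hs₀ hs => integrableOn_rpow_div_rpow_add_rpow_mul three_pos ha hb hs₀ (by linarith)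
  have hK₁ := hK (β + 1) (by linarith) (by linarith)
  have hK₂ := hK (β + 2) (by linarith) (by linarith)
  have hK₃ := hK (β + 3) (by linarith) (by linarith)
  rw [setIntegral_congr_fun measurableSet_Ioi fun x hx => I4_integrand_eq ha hb hx β,
    integral_sub, integral_add, integral_const_mul, integral_const_mul,
    integral_rpow_div_rpow_add_rpow_mul three_pos ha hb hab (by linarith) (by linarith)
      (by contrapose! h0; linarith),
    integral_rpow_div_rpow_add_rpow_mul three_pos ha hb hab (by linarith) (by linarith)
      (by contrapose! h1; linarith),
    integral_rpow_div_rpow_add_rpow_mul three_pos ha hb hab (by linarith) (by linarith)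
      (by contrapose! h2; linarith)]
  · exact I4_mellin_combination_eq ha hb hab hβ₁ hβ₂ h0 h1 h2
  · exact hK₃
  · exact hK₂.const_mul _
  · exact hK₃.add (hK₂.const_mul _)
  · exact hK₁.const_mul _
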